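/- arXiv:1403.1553 — 3 statements merged into one kernel-verified Lean document; each statement's English description precedes it below -/
import Mathlib

section
/- If F is a decreasing filtration and U an increasing filtration on a finite-dimensional complex vector space H such that Gr_F^p Gr_q^U H = 0 for all p ≠ q, then H = F^p ⊕ U_{p-1} for every integer p. -/
/-!
Opposedness says `F^p ∩ U_q ⊆ (F^{p+1} ∩ U_q) + (F^p ∩ U_{q-1})` for `p ≠ q`. Inducting upwards
in `q`, starting where `U` vanishes, the second summand is zero whenever `q < p`, so
`F^p ∩ U_q` is stable under raising `p` and vanishes because `F` does; in particular
`F^p ∩ U_{p-1} = 0`. For `q > r` the same inclusion pushes `F^r ∩ U_q` down to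
`F^{r+1} + (F^r ∩ U_{q-1})`; starting from `q` with `U_q = H` this gives `F^r ⊆ F^{r+1} + U_r`,
and descending from an `r` with `F^r = H` gives `F^p + U_{p-1} = H`. Only lattice theory is
involved; finite dimensionality just makes both filtrations reach `0` and `H`.
-/

open Set

section Stabilization

variable {α ι : Type*} [CompleteLattice α]

theorem IsChain.sSup_mem [WellFoundedGT α] {s : Set α} (hs : IsChain (· ≤ ·) s)
    (hne : s.Nonempty) : sSup s ∈ s :=
  CompleteLattice.WellFoundedGT.isSupClosedCompact α ‹_› s hne fun a ha b hb => by
    rcases hs.total ha hb with h | h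
    · rwa [sup_eq_right.2 h]
    · rwa [sup_eq_left.2 h]

theorem IsChain.exists_eq_top_of_iSup_eq_top [WellFoundedGT α] [Nonempty ι] {f : ι → α}
    (hf : IsChain (· ≤ ·) (range f)) (htop : ⨆ i, f i = ⊤) : ∃ i, f i = ⊤ := by
  obtain ⟨i, hi⟩ := hf.sSup_mem (range_nonempty f)
  exact ⟨i, by rw [hi, sSup_range, htop]⟩

theorem IsChain.exists_eq_bot_of_iInf_eq_bot [WellFoundedLT α] [Nonempty ι] {f : ι → α}
    (hf : IsChain (· ≤ ·) (range f)) (hbot : ⨅ i, f i = ⊥) : ∃ i, f i = ⊥ :=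
  IsChain.exists_eq_top_of_iSup_eq_top (α := αᵒᵈ) hf.symm hbot

end Stabilization

section Opposite

variable {α : Type*} [Lattice α] {F U : ℤ → α}

/-- `Gr_F^p Gr_q^U = 0` for `p ≠ q`, without quotients: the image of `F^p ∩ U_q` in
`U_q / U_{q-1}` lies in that of `F^{p+1} ∩ U_q`. -/
def AreOpposite (F U : ℤ → α) : Prop :=
  ∀ p q : ℤ, p ≠ q → F p ⊓ U q ≤ (F (p + 1) ⊓ U q) ⊔ (F p ⊓ U (q - 1))

namespace AreOpposite

theorem inf_eq_bot [OrderBot α] (hopp : AreOpposite F U) (hF : Antitone F) (hU : Monotone U)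
    {b c : ℤ} (hb : F b = ⊥) (hc : U c = ⊥) {p q : ℤ} (hqp : q < p) : F p ⊓ U q = ⊥ := by
  rcases lt_or_ge q c with hqc | hcq
  · rw [le_bot_iff.1 ((hU hqc.le).trans_eq hc), inf_bot_eq]
  induction q, hcq using Int.leInduction generalizing p with
  | base => rw [hc, inf_bot_eq]
  | succ q _ ih =>
    have hmono : MonotoneOn (fun r => F r ⊓ U (q + 1)) (Ici p) :=
      monotoneOn_of_le_succ ordConnected_Ici fun r _ hpr _ => by
        have h := hopp r (q + 1) (by grind)
        rwa [add_sub_cancel_right, ih (by grind), sup_bot_eq, ← Order.succ_eq_add_one] at h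
    refine le_bot_iff.1 ?_
    calc F p ⊓ U (q + 1) ≤ F (max p b) ⊓ U (q + 1) :=
          hmono self_mem_Ici (le_max_left p b) (le_max_left p b)
      _ ≤ F b := inf_le_left.trans (hF (le_max_right p b))
      _ = ⊥ := hb

theorem le_sup_succ [OrderTop α] (hopp : AreOpposite F U) (hU : Monotone U) {d : ℤ}
    (hd : U d = ⊤) (r : ℤ) : F r ≤ F (r + 1) ⊔ U r := by
  have hanti : AntitoneOn (fun q => F (r + 1) ⊔ (F r ⊓ U q)) (Ici r) :=
    antitoneOn_of_succ_le ordConnected_Ici fun q _ hrq _ => by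
      have h := hopp r (q + 1) (by grind)
      rw [add_sub_cancel_right] at h
      rw [Order.succ_eq_add_one]
      exact sup_le le_sup_left (h.trans (sup_le_sup_right inf_le_left _))
  calc F r = F r ⊓ U (max r d) := by
        rw [top_le_iff.1 (hd.symm.trans_le (hU (le_max_right r d))), inf_top_eq]
    _ ≤ F (r + 1) ⊔ (F r ⊓ U (max r d)) := le_sup_right
    _ ≤ F (r + 1) ⊔ (F r ⊓ U r) := hanti self_mem_Ici (le_max_left r d) (le_max_left r d)
    _ ≤ F (r + 1) ⊔ U r := sup_le_sup_left inf_le_right _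

theorem sup_eq_top [OrderTop α] (hopp : AreOpposite F U) (hF : Antitone F) (hU : Monotone U)
    {a d : ℤ} (ha : F a = ⊤) (hd : U d = ⊤) (p : ℤ) : F p ⊔ U (p - 1) = ⊤ := by
  have hmono : MonotoneOn (fun r => F r ⊔ U (p - 1)) (Iic p) :=
    monotoneOn_of_le_succ ordConnected_Iic fun r _ _ hrp => by
      rw [Order.succ_eq_add_one] at hrp ⊢
      exact sup_le ((hopp.le_sup_succ hU hd r).trans (sup_le_sup_left (hU (by grind)) _))
        le_sup_right
  refine top_le_iff.1 ?_
  calc ⊤ = F a := ha.symm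
    _ ≤ F (min a p) ⊔ U (p - 1) := le_sup_of_le_left (hF (min_le_left a p))
    _ ≤ F p ⊔ U (p - 1) := hmono (min_le_right a p) self_mem_Iic (min_le_right a p)

theorem isCompl [BoundedOrder α] (hopp : AreOpposite F U) (hF : Antitone F) (hU : Monotone U)
    {a b c d : ℤ} (ha : F a = ⊤) (hb : F b = ⊥) (hc : U c = ⊥) (hd : U d = ⊤) (p : ℤ) :
    IsCompl (F p) (U (p - 1)) :=
  ⟨disjoint_iff.2 (hopp.inf_eq_bot hF hU hb hc (sub_one_lt p)),
    codisjoint_iff.2 (hopp.sup_eq_top hF hU ha hd p)⟩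

end AreOpposite

end Opposite

/-- If `F` is a decreasing (exhaustive, separated) filtration and `U` an increasing
(exhaustive, separated) filtration on a finite-dimensional complex vector space `H`
such that `Gr_F^p Gr_q^U H = 0` for all `p ≠ q` (expressed without quotients:
`F p ⊓ U q ≤ (F (p+1) ⊓ U q) ⊔ (F p ⊓ U (q-1))`), then `H = F^p ⊕ U_{p-1}` for every `p`. -/
theorem opposite_filtrations_gives_splitting
    (H : Type*) [AddCommGroup H] [Module ℂ H] [FiniteDimensional ℂ H]
    (F U : ℤ → Submodule ℂ H)
    (hF : Antitone F) (hFexh : (⨆ p, F p) = ⊤) (hFsep : (⨅ p, F p) = ⊥)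
    (hU : Monotone U) (hUexh : (⨆ q, U q) = ⊤) (hUsep : (⨅ q, U q) = ⊥)
    (hopp : ∀ p q : ℤ, p ≠ q →
      F p ⊓ U q ≤ (F (p + 1) ⊓ U q) ⊔ (F p ⊓ U (q - 1))) :
    ∀ p : ℤ, IsCompl (F p) (U (p - 1)) := by
  obtain ⟨a, ha⟩ := hF.isChain_range.exists_eq_top_of_iSup_eq_top hFexh
  obtain ⟨b, hb⟩ := hF.isChain_range.exists_eq_bot_of_iInf_eq_bot hFsep
  obtain ⟨c, hc⟩ := hU.isChain_range.exists_eq_bot_of_iInf_eq_bot hUsep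
  obtain ⟨d, hd⟩ := hU.isChain_range.exists_eq_top_of_iSup_eq_top hUexh
  exact AreOpposite.isCompl hopp hF hU ha hb hc hd
end

section
/- Let S be a nondegenerate bilinear form on a finite-dimensional vector space V over a field of characteristic zero, and N a nilpotent endomorphism which is an infinitesimal isometry of S, i.e. S(Nx, y) + S(x, Ny) = 0 for all x, y. Let W be the monodromy weight filtration of N. Then for each l ≥ 0 the form S_l(u, v) := S(u, N^l v) induces a well-defined bilinear form on Gr_l^W V, and its restriction to the primitive part P_l = ker(N^{l+1} : Gr_l^W V → Gr_{-l-2}^W V) is nondegenerate. -/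
open Submodule

/-- `W` is the monodromy weight filtration of the nilpotent endomorphism `N`, centered at 0. -/
def IsWeightFiltration {k : Type*} [Field k] {V : Type*} [AddCommGroup V] [Module k V]
    (N : Module.End k V) (W : ℤ → Submodule k V) : Prop :=
  Monotone W ∧ (⨆ l, W l) = ⊤ ∧ (⨅ l, W l) = ⊥ ∧
  (∀ l : ℤ, Submodule.map N (W l) ≤ W (l - 2)) ∧
  (∀ l : ℕ, Submodule.map (N ^ l) (W l) ⊔ W (-(l : ℤ) - 1) = W (-(l : ℤ)) ∧
    W l ⊓ Submodule.comap (N ^ l) (W (-(l : ℤ) - 1)) = W ((l : ℤ) - 1))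

/-!
Peeling off `W_{-m} = N^m W_m + W_{-m-1}` and moving `N^m` across `S` (which costs only a sign)
shows that `W_a` and `W_b` are `S`-orthogonal whenever `a + b < 0`. The isomorphisms
`N^j : Gr_j ≅ Gr_{-j}` make `dim W_a + dim W_{-a-1}` independent of `a`, hence equal to `dim V`,
so by nondegeneracy `W_{l-1}` is exactly the set of `u` with `S(u, W_{-l}) = 0`, i.e. with
`S(u, N^l W_l) = 0` when `u ∈ W_l`. Finally `W_l = P_l + N W_{l+2}`, and for primitive `u` the
pairing with `N W_{l+2}` vanishes because `S(u, N^{l+1} w) = ± S(N^{l+1} u, w)` with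
`N^{l+1} u ∈ W_{-l-3}`.
-/

theorem Monotone.exists_forall_le_eq_bot {α : Type*} [CompleteLattice α] [WellFoundedLT α]
    {W : ℤ → α} (hW : Monotone W) (h : ⨅ l, W l = ⊥) : ∃ a, ∀ b ≤ a, W b = ⊥ := by
  obtain ⟨_, ⟨a, rfl⟩, hmin⟩ := wellFounded_lt.has_min (Set.range W) ⟨W 0, 0, rfl⟩
  have hconst : ∀ b ≤ a, W b = W a := fun b hb =>
    (hW hb).eq_of_not_lt (hmin (W b) ⟨b, rfl⟩)
  refine ⟨a, fun b hb => (hconst b hb).trans (eq_bot_iff.2 (h ▸ le_iInf fun j => ?_))⟩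
  rcases le_total a j with hj | hj
  · exact hW hj
  · exact (hconst j hj).ge

theorem Monotone.exists_forall_ge_eq_top {α : Type*} [CompleteLattice α] [WellFoundedGT α]
    {W : ℤ → α} (hW : Monotone W) (h : ⨆ l, W l = ⊤) : ∃ a, ∀ b ≥ a, W b = ⊤ := by
  have hW' : Monotone fun l => OrderDual.toDual (W (-l)) := fun a b hab => hW (neg_le_neg hab)
  have h' : ⨅ l, OrderDual.toDual (W (-l)) = ⊥ := by
    rw [← (Equiv.neg ℤ).iSup_comp (g := W)] at h
    exact h
  obtain ⟨a, ha⟩ := hW'.exists_forall_le_eq_bot h'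
  exact ⟨-a, fun b hb => by simpa using ha (-b) (by omega)⟩

section Finrank

variable {k V V₂ : Type*} [Field k] [AddCommGroup V] [Module k V] [AddCommGroup V₂] [Module k V₂]
  [FiniteDimensional k V] [FiniteDimensional k V₂]

open Module

theorem finrank_add_finrank_eq_of_map_sup_eq (f : V →ₗ[k] V₂) {A A' : Submodule k V}
    {B B' : Submodule k V₂} (hB : map f A ⊔ B' = B) (hA : A ⊓ comap f B' = A') :
    finrank k A + finrank k B' = finrank k B + finrank k A' := by
  -- `A → V₂ ⧸ B'` (via `f`) and `B → V₂ ⧸ B'` have the same image, and kernels `A'` and `B'`.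
  let g : A →ₗ[k] V₂ ⧸ B' := B'.mkQ ∘ₗ f ∘ₗ A.subtype
  let h : B →ₗ[k] V₂ ⧸ B' := B'.mkQ ∘ₗ B.subtype
  have hrange : LinearMap.range g = LinearMap.range h := by
    simp only [g, h, LinearMap.range_comp, range_subtype, ← hB, Submodule.map_sup,
      mkQ_map_self, sup_bot_eq]
  have hker_g : finrank k (LinearMap.ker g) = finrank k A' := by
    rw [← finrank_map_subtype_eq, ← hA, LinearMap.ker_comp, ker_mkQ, comap_comp, map_comap_subtype]
  have hker_h : finrank k (LinearMap.ker h) = finrank k B' := by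
    rw [← finrank_map_subtype_eq, LinearMap.ker_comp, ker_mkQ, map_comap_subtype,
      inf_eq_right.2 (hB ▸ le_sup_right)]
  have hg := LinearMap.finrank_range_add_finrank_ker g
  have hh := LinearMap.finrank_range_add_finrank_ker h
  rw [hrange] at hg
  omega

theorem LinearMap.SeparatingLeft.separatingRight {S : V →ₗ[k] V →ₗ[k] k}
    (hS : S.SeparatingLeft) : S.SeparatingRight := by
  have hsurj : Function.Surjective S :=
    (LinearMap.injective_iff_surjective_of_finrank_eq_finrank Subspace.dual_finrank_eq.symm).1
      (LinearMap.ker_eq_bot.1 (LinearMap.separatingLeft_iff_ker_eq_bot.1 hS))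
  intro y hy
  refine (Module.forall_dual_apply_eq_zero_iff k y).1 fun φ => ?_
  obtain ⟨x, rfl⟩ := hsurj φ
  exact hy x

end Finrank

theorem pow_apply_left_eq_zero_iff {k V : Type*} [Field k] [AddCommGroup V] [Module k V]
    {S : V →ₗ[k] V →ₗ[k] k} {N : Module.End k V} (hSN : ∀ x y, S (N x) y + S x (N y) = 0)
    (m : ℕ) (x y : V) : S ((N ^ m) x) y = 0 ↔ S x ((N ^ m) y) = 0 := by
  induction m generalizing x with
  | zero => simp
  | succ m ih =>
    have hx : (N ^ (m + 1)) x = (N ^ m) (N x) := by rw [pow_succ, Module.End.mul_apply]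
    have hy : (N ^ (m + 1)) y = N ((N ^ m) y) := by rw [pow_succ', Module.End.mul_apply]
    rw [hx, hy, ih, eq_neg_of_add_eq_zero_left (hSN x _), neg_eq_zero]

/-- The preimage in `W l` of the primitive part `P_l ⊆ Gr_l^W`. -/
def primitivePart {k V : Type*} [Field k] [AddCommGroup V] [Module k V]
    (N : Module.End k V) (W : ℤ → Submodule k V) (l : ℕ) : Submodule k V :=
  W l ⊓ comap (N ^ (l + 1)) (W (-(l : ℤ) - 3))

namespace IsWeightFiltration

open LinearMap Module

variable {k V : Type*} [Field k] [AddCommGroup V] [Module k V] {N : Module.End k V}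
  {W : ℤ → Submodule k V} {S : V →ₗ[k] V →ₗ[k] k}

theorem apply_mem (hW : IsWeightFiltration N W) {a : ℤ} {x : V} (hx : x ∈ W a) :
    N x ∈ W (a - 2) :=
  hW.2.2.2.1 a (mem_map_of_mem hx)

theorem pow_apply_mem (hW : IsWeightFiltration N W) (m : ℕ) {a : ℤ} {x : V} (hx : x ∈ W a) :
    (N ^ m) x ∈ W (a - 2 * m) := by
  induction m generalizing a x with
  | zero => simpa using hx
  | succ m ih =>
    rw [pow_succ, Module.End.mul_apply]
    convert ih (hW.apply_mem hx) using 2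
    push_cast
    ring

theorem map_pow_sup_eq (hW : IsWeightFiltration N W) (l : ℕ) :
    map (N ^ l) (W l) ⊔ W (-(l : ℤ) - 1) = W (-(l : ℤ)) :=
  (hW.2.2.2.2 l).1

theorem inf_comap_pow_eq (hW : IsWeightFiltration N W) (l : ℕ) :
    W l ⊓ comap (N ^ l) (W (-(l : ℤ) - 1)) = W ((l : ℤ) - 1) :=
  (hW.2.2.2.2 l).2

theorem exists_sub_mem_primitivePart (hW : IsWeightFiltration N W) {l : ℕ} {v : V}
    (hv : v ∈ W l) : ∃ w ∈ W ((l : ℤ) + 2), v - N w ∈ primitivePart N W l := by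
  have hNv := hW.pow_apply_mem (l + 1) hv
  rw [show (l : ℤ) - 2 * ((l + 1 : ℕ) : ℤ) = -((l + 2 : ℕ) : ℤ) by push_cast; ring,
    ← hW.map_pow_sup_eq] at hNv
  obtain ⟨_, ⟨w, hw, rfl⟩, r, hr, hsum⟩ := mem_sup.1 hNv
  push_cast at hw hr
  refine ⟨w, hw, mem_inf.2 ⟨sub_mem hv ?_, mem_comap.2 ?_⟩⟩
  · simpa using hW.apply_mem hw
  · rw [map_sub, ← hsum, pow_succ N (l + 1), Module.End.mul_apply, add_sub_cancel_left]
    convert hr using 2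
    ring

variable [FiniteDimensional k V]

theorem exists_forall_le_eq_bot (hW : IsWeightFiltration N W) : ∃ c, ∀ b ≤ c, W b = ⊥ :=
  hW.1.exists_forall_le_eq_bot hW.2.2.1

theorem exists_forall_ge_eq_top (hW : IsWeightFiltration N W) : ∃ d, ∀ b ≥ d, W b = ⊤ :=
  hW.1.exists_forall_ge_eq_top hW.2.1

theorem apply_eq_zero_of_add_neg (hW : IsWeightFiltration N W)
    (hSN : ∀ x y, S (N x) y + S x (N y) = 0)
    {a b : ℤ} (hab : a + b < 0) {x y : V} (hx : x ∈ W a) (hy : y ∈ W b) : S x y = 0 := by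
  obtain ⟨c, hc⟩ := hW.exists_forall_le_eq_bot
  -- Induct on how far `min a b` lies above the weights where `W` vanishes.
  suffices key : ∀ n : ℕ, ∀ S : V →ₗ[k] V →ₗ[k] k, (∀ x y, S (N x) y + S x (N y) = 0) →
      ∀ a b : ℤ, min a b ≤ c + n → a + b < 0 → ∀ x ∈ W a, ∀ y ∈ W b, S x y = 0 from
    key (a - c).toNat S hSN a b (by omega) hab x hx y hy
  intro n
  induction n with
  | zero =>
    intro S _ a b hmin _ x hx y hy
    rcases min_le_iff.1 hmin with h | h
    · rw [hc a (by omega), mem_bot] at hx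
      simp [hx]
    · rw [hc b (by omega), mem_bot] at hy
      simp [hy]
  | succ n ih =>
    intro S hSN a b hmin hab
    -- `S.flip` is again an infinitesimal isometry, and swaps the roles of `a` and `b`.
    wlog hle : a ≤ b generalizing S a b
    · intro x hx y hy
      exact this S.flip (fun x y => by simpa [add_comm] using hSN y x) b a (by omega) (by omega)
        (by omega) y hy x hx
    obtain ⟨m, rfl⟩ := Int.exists_eq_neg_ofNat (show a ≤ 0 by omega)
    intro x hx y hy
    rw [← hW.map_pow_sup_eq] at hx
    obtain ⟨_, ⟨z, hz, rfl⟩, x', hx', rfl⟩ := mem_sup.1 hx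
    rw [map_add, LinearMap.add_apply, ih S hSN _ b (by omega) (by omega) x' hx' y hy, add_zero,
      pow_apply_left_eq_zero_iff hSN]
    exact ih S hSN m _ (by omega) (by omega) z hz _ (hW.pow_apply_mem m hy)

theorem finrank_add_finrank_eq (hW : IsWeightFiltration N W) {a b : ℤ} (hab : a + b = -1) :
    finrank k (W a) + finrank k (W b) = finrank k V := by
  -- `g` is 1-periodic by the isomorphisms `Gr_j ≅ Gr_{-j}`, and equals `dim V` far to the left.
  set g : ℤ → ℕ := fun a => finrank k (W a) + finrank k (W (-a - 1))
  have hsymm : ∀ a, g (-a - 1) = g a := fun a => by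
    simp only [g]
    rw [show -(-a - 1) - 1 = a by ring, add_comm]
  have hstep : ∀ j : ℕ, g j = g (j - 1) := fun j => by
    simp only [g]
    rw [show -((j : ℤ) - 1) - 1 = -j by ring, add_comm (finrank k (W (j - 1))),
      ← finrank_add_finrank_eq_of_map_sup_eq _ (hW.map_pow_sup_eq j) (hW.inf_comap_pow_eq j)]
  have hper : Function.Periodic g 1 := fun a => by
    rcases le_or_gt 0 (a + 1) with ha | ha
    · obtain ⟨j, hj⟩ := Int.eq_ofNat_of_zero_le ha
      rw [hj, hstep, ← hj, add_sub_cancel_right]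
    · obtain ⟨j, hj⟩ := Int.eq_ofNat_of_zero_le (show 0 ≤ -a - 1 by omega)
      rw [← hsymm, ← hsymm a, hj, hstep j, ← hj]
      ring_nf
  obtain ⟨c, hc⟩ := hW.exists_forall_le_eq_bot
  obtain ⟨d, hd⟩ := hW.exists_forall_ge_eq_top
  have hfar : g (min c (-d - 1)) = finrank k V := by
    simp only [g]
    rw [hc _ (min_le_left _ _), hd _ (by omega), finrank_bot, finrank_top, zero_add]
  have := (hper.int_mul_eq a).trans (hper.int_mul_eq (min c (-d - 1))).symm
  simp only [Int.cast_id, mul_one] at this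
  rw [← hfar, ← this, show b = -a - 1 by omega]

theorem flip_orthogonal_eq (hW : IsWeightFiltration N W) (hS : S.SeparatingLeft)
    (hSN : ∀ x y, S (N x) y + S x (N y) = 0) {a b : ℤ} (hab : a + b = -1) :
    BilinForm.orthogonal S.flip (W b) = W a := by
  have hker : LinearMap.ker S.flip = ⊥ :=
    separatingRight_iff_flip_ker_eq_bot.1 hS.separatingRight
  have hdim := BilinForm.finrank_add_finrank_orthogonal' (B := S.flip) (W b)
  rw [hker, inf_bot_eq, finrank_bot, add_zero, ← hW.finrank_add_finrank_eq hab] at hdim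
  refine (eq_of_le_of_finrank_le (fun x hx => ?_) (by omega)).symm
  exact BilinForm.mem_orthogonal_iff.2 fun y hy =>
    hW.apply_eq_zero_of_add_neg hSN (by omega) hx hy

theorem mem_of_forall_apply_pow_eq_zero (hW : IsWeightFiltration N W) (hS : S.SeparatingLeft)
    (hSN : ∀ x y, S (N x) y + S x (N y) = 0) {l : ℕ} {u : V} (hu : u ∈ W l)
    (h : ∀ v ∈ W l, S u ((N ^ l) v) = 0) : u ∈ W ((l : ℤ) - 1) := by
  rw [← hW.flip_orthogonal_eq hS hSN (b := -l) (by ring), BilinForm.mem_orthogonal_iff]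
  intro y hy
  rw [← hW.map_pow_sup_eq] at hy
  obtain ⟨_, ⟨v, hv, rfl⟩, r, hr, rfl⟩ := mem_sup.1 hy
  rw [flip_apply, map_add, h v hv, hW.apply_eq_zero_of_add_neg hSN (by omega) hu hr,
    add_zero]

theorem apply_pow_eq_zero_of_forall_primitivePart (hW : IsWeightFiltration N W)
    (hSN : ∀ x y, S (N x) y + S x (N y) = 0) {l : ℕ} {u : V} (hu : u ∈ primitivePart N W l)
    (h : ∀ v ∈ primitivePart N W l, S u ((N ^ l) v) = 0) {v : V} (hv : v ∈ W l) :
    S u ((N ^ l) v) = 0 := by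
  obtain ⟨w, hw, hp⟩ := hW.exists_sub_mem_primitivePart hv
  have hNw : S u ((N ^ (l + 1)) w) = 0 := by
    rw [← pow_apply_left_eq_zero_iff hSN]
    exact hW.apply_eq_zero_of_add_neg hSN (by omega) hu.2 hw
  rw [← sub_add_cancel v (N w), map_add, map_add, h _ hp, ← Module.End.mul_apply, ← pow_succ,
    hNw, add_zero]

end IsWeightFiltration

theorem primitive_pairing_nondegenerate_general
    (k : Type*) [Field k]
    (V : Type*) [AddCommGroup V] [Module k V] [FiniteDimensional k V]
    (S : V →ₗ[k] V →ₗ[k] k)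
    (hSnd : ∀ x : V, (∀ y : V, S x y = 0) → x = 0)
    (N : Module.End k V)
    (hinf : ∀ x y : V, S (N x) y + S x (N y) = 0)
    (W : ℤ → Submodule k V) (hW : IsWeightFiltration N W) :
    ∀ l : ℕ,
      (∀ u v : V, u ∈ W ((l : ℤ) - 1) → v ∈ W (l : ℤ) → S u ((N ^ l) v) = 0) ∧
      (∀ u v : V, u ∈ W (l : ℤ) → v ∈ W ((l : ℤ) - 1) → S u ((N ^ l) v) = 0) ∧
      (∀ u : V, u ∈ W (l : ℤ) ⊓ Submodule.comap (N ^ (l + 1)) (W (-(l : ℤ) - 3)) →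
        (∀ v : V, v ∈ W (l : ℤ) ⊓ Submodule.comap (N ^ (l + 1)) (W (-(l : ℤ) - 3)) →
          S u ((N ^ l) v) = 0) →
        u ∈ W ((l : ℤ) - 1)) := by
  intro l
  refine ⟨fun u v hu hv => ?_, fun u v hu hv => ?_, fun u hu h => ?_⟩
  · exact hW.apply_eq_zero_of_add_neg hinf (by omega) hu (hW.pow_apply_mem l hv)
  · exact hW.apply_eq_zero_of_add_neg hinf (by omega) hu (hW.pow_apply_mem l hv)
  · exact hW.mem_of_forall_apply_pow_eq_zero hSnd hinf hu.1
      fun v hv => hW.apply_pow_eq_zero_of_forall_primitivePart hinf hu h hv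

/-- Let `S` be a nondegenerate bilinear form, `N` a nilpotent infinitesimal isometry of `S`,
and `W` the weight filtration of `N`. Then for each `l ≥ 0` the form
`S_l(u,v) = S(u, N^l v)` descends to `Gr_l^W V` (it vanishes as soon as one argument lies in
`W_{l-1}`), and its restriction to the primitive part
`P_l = ker (N^{l+1} : Gr_l^W → Gr_{-l-2}^W)` is nondegenerate: if `u ∈ W_l` represents a
primitive class pairing to zero with all primitive classes, then `u ∈ W_{l-1}`. -/
theorem primitive_pairing_nondegenerate
    (k : Type*) [Field k] [CharZero k]
    (V : Type*) [AddCommGroup V] [Module k V] [FiniteDimensional k V]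
    (S : V →ₗ[k] V →ₗ[k] k)
    (hSnd : ∀ x : V, (∀ y : V, S x y = 0) → x = 0)
    (N : Module.End k V) (hN : IsNilpotent N)
    (hinf : ∀ x y : V, S (N x) y + S x (N y) = 0)
    (W : ℤ → Submodule k V) (hW : IsWeightFiltration N W) :
    ∀ l : ℕ,
      (∀ u v : V, u ∈ W ((l : ℤ) - 1) → v ∈ W (l : ℤ) → S u ((N ^ l) v) = 0) ∧
      (∀ u v : V, u ∈ W (l : ℤ) → v ∈ W ((l : ℤ) - 1) → S u ((N ^ l) v) = 0) ∧
      (∀ u : V, u ∈ W (l : ℤ) ⊓ Submodule.comap (N ^ (l + 1)) (W (-(l : ℤ) - 3)) →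
        (∀ v : V, v ∈ W (l : ℤ) ⊓ Submodule.comap (N ^ (l + 1)) (W (-(l : ℤ) - 3)) →
          S u ((N ^ l) v) = 0) →
        u ∈ W ((l : ℤ) - 1)) :=
  primitive_pairing_nondegenerate_general k V S hSnd N hinf W hW
end

section
/- Let V be a finite-dimensional complex vector space with a bigrading V = ⊕_{p,q} I^{p,q}, and let N : V → V be a linear map of type (-1,-1), i.e. N(I^{p,q}) ⊆ I^{p-1,q-1}. Define the semisimple operator Y by Y·v = (p+q-k)·v for v ∈ I^{p,q} (k a fixed integer). If for each j, N^j : ⊕_{p+q=k+j} I^{p,q} → ⊕_{p+q=k-j} I^{p,q} is an isomorphism, then there exists a linear map N⁺ : V → V of type (1,1) such that {N⁺, Y, N} is an sl₂-triple: [Y, N] = -2N, [Y, N⁺] = 2N⁺, [N⁺, N] = Y. -/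
/-!
The image of `ad N = (· * N - N * ·)` is the trace-orthogonal complement of the centralizer of
`N`, so `Y = X * N - N * X` for some `X` as soon as `tr (Y Z) = 0` for every `Z` commuting with
`N`. Let `E c` be the projection onto the weight-`c` summands, so that `Y = ∑ c • E c` and
`tr (Y Z) = ∑ c * tr (E c * Z)`. Since `N ^ j` maps weight `j` isomorphically onto weight `-j` and
`E (-j) * N ^ j = N ^ j * E j`, it has a relative inverse `G` with `N ^ j * G = E (-j)` and
`G * N ^ j = E j`; for `Z` commuting with `N` this gives
`tr (E (-j) * Z) = tr (N ^ j * G * Z) = tr (G * Z * N ^ j) = tr (E j * Z)`,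
so the sum is odd in `c` and vanishes. Finally, as `N` has type `(-1,-1)` and `Y` type `(0,0)`,
the type-`(1,1)` component `N⁺` of `X` still satisfies `N⁺ * N - N * N⁺ = Y`.
-/

theorem Finset.sum_intCast_mul_eq_zero_of_even {R : Type*} [CommRing R] {T : Finset ℤ}
    (hT : ∀ c ∈ T, -c ∈ T) {a : ℤ → R} (ha : ∀ c, a (-c) = a c) :
    ∑ c ∈ T, (c : R) * a c = 0 :=
  Finset.sum_involution (fun c _ => -c) (fun c _ => by simp [ha])
    (fun c _ hc hneg => hc (by rw [show c = 0 by omega, Int.cast_zero, zero_mul]))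
    (fun c hc => hT c hc) (fun c _ => neg_neg c)

namespace LinearMap

section CommRing

variable {R V : Type*} [CommRing R] [AddCommGroup V] [Module R V]

theorem trace_mul_eq_trace_mul_of_commute {F G E E' Z : Module.End R V} (hZ : Commute F Z)
    (hFG : F * G = E') (hGF : G * F = E) : trace R V (E' * Z) = trace R V (E * Z) := by
  rw [← hFG, ← hGF, mul_assoc, trace_mul_comm, mul_assoc, ← hZ.eq, mul_assoc]

theorem exists_mul_eq_and_mul_eq_of_map_eq {F E E' : Module.End R V} {W W' : Submodule R V}
    (hE : ∀ x, E x ∈ W) (hE' : ∀ x, E' x ∈ W') (hFE : E' * F = F * E)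
    (hmap : W.map F = W') (hinj : ∀ x ∈ W, F x = 0 → x = 0) :
    ∃ G : Module.End R V, F * G = E' ∧ G * F = E := by
  have hFW : ∀ x ∈ W, F x ∈ W' := fun x hx => hmap ▸ Submodule.mem_map_of_mem hx
  have hbij : Function.Bijective (F.restrict hFW) := by
    refine ⟨(injective_iff_map_eq_zero _).2 fun x hx =>
      Subtype.ext (hinj x x.2 (congrArg Subtype.val hx)), fun y => ?_⟩
    obtain ⟨x, hx, hxy⟩ : (y : V) ∈ W.map F := hmap ▸ y.2
    exact ⟨⟨x, hx⟩, Subtype.ext hxy⟩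
  let e := LinearEquiv.ofBijective _ hbij
  refine ⟨W.subtype ∘ₗ e.symm.toLinearMap ∘ₗ E'.codRestrict W' hE', ?_, ?_⟩
  · ext x
    exact congrArg Subtype.val (e.apply_symm_apply ⟨E' x, hE' x⟩)
  · ext x
    have hx : (⟨E' (F x), hE' (F x)⟩ : W') = e ⟨E x, hE x⟩ :=
      Subtype.ext (by simpa [e] using congrArg (· x) hFE)
    show ((e.symm ⟨E' (F x), hE' (F x)⟩ : W) : V) = E x
    rw [hx, e.symm_apply_apply]

end CommRing

variable {K V : Type*} [Field K] [AddCommGroup V] [Module K V] [FiniteDimensional K V]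

theorem eq_zero_of_forall_trace_mul_eq_zero {f : Module.End K V}
    (hf : ∀ g, trace K V (g * f) = 0) : f = 0 := by
  let b := Module.finBasis K V
  apply (toMatrix b b).injective
  rw [map_zero, Matrix.ext_iff_trace_mul_left]
  intro m
  obtain ⟨g, rfl⟩ := (toMatrix b b).surjective m
  rw [← toMatrix_mul, ← trace_eq_matrix_trace, hf, mul_zero, Matrix.trace_zero]

theorem exists_mul_sub_mul_eq_of_trace_mul_eq_zero {N Y : Module.End K V}
    (hY : ∀ Z, Commute N Z → trace K V (Y * Z) = 0) : ∃ X, X * N - N * X = Y := by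
  let ad : Module.End K (Module.End K V) := mulRight K N - mulLeft K N
  suffices Y ∈ range ad from this
  by_contra hmem
  obtain ⟨φ, hφY, hφ⟩ := Submodule.exists_dual_map_eq_bot_of_notMem hmem inferInstance
  let B : LinearMap.BilinForm K (Module.End K V) := (mul K (Module.End K V)).compr₂ (trace K V)
  have hB : B.Nondegenerate :=
    ⟨fun f hf => eq_zero_of_forall_trace_mul_eq_zero fun g => by rw [trace_mul_comm]; exact hf g,
      fun f hf => eq_zero_of_forall_trace_mul_eq_zero hf⟩
  obtain ⟨Z, rfl⟩ := (B.toDual hB).surjective φ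
  have hZ : N * Z - Z * N = 0 := eq_zero_of_forall_trace_mul_eq_zero fun X => by
    have hZX : B Z (ad X) = 0 := by
      simpa [hφ, BilinForm.toDual_def] using
        Submodule.mem_map_of_mem (f := B.toDual hB Z) (mem_range_self ad X)
    rw [← hZX]
    simp only [B, ad, compr₂_apply, mul_apply', sub_apply, mulRight_apply, mulLeft_apply, mul_sub,
      map_sub, ← mul_assoc]
    rw [trace_mul_cycle K X N Z, trace_mul_cycle K Z N X]
  apply hφY
  rw [BilinForm.toDual_def]
  simpa [B, trace_mul_comm K Z] using hY Z (sub_eq_zero.1 hZ)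

end LinearMap

namespace DirectSum.IsInternal

section CommRing

variable {R M P ι : Type*} [CommRing R] [AddCommGroup M] [Module R M] [AddCommGroup P]
  [Module R P] [DecidableEq ι] {A : ι → Submodule R M} (h : IsInternal A)

include h in
theorem induction {p : M → Prop} (x : M) (mem : ∀ i, ∀ x ∈ A i, p x) (zero : p 0)
    (add : ∀ x y, p x → p y → p (x + y)) : p x :=
  Submodule.iSup_induction A (motive := p) (h.submodule_iSup_eq_top ▸ Submodule.mem_top) mem
    zero add

include h in
theorem linearMap_ext {f g : M →ₗ[R] P} (hfg : ∀ i, ∀ x ∈ A i, f x = g x) : f = g :=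
  LinearMap.ext fun x => h.induction x hfg (by simp) fun x y hx hy => by simp [hx, hy]

noncomputable def lift (f : ∀ i, A i →ₗ[R] P) : M →ₗ[R] P :=
  letI := h.chooseDecomposition
  toModule R ι P f ∘ₗ (decomposeLinearEquiv A).toLinearMap

theorem lift_apply_of_mem (f : ∀ i, A i →ₗ[R] P) {i : ι} {x : M} (hx : x ∈ A i) :
    h.lift f x = f i ⟨x, hx⟩ := by
  let := h.chooseDecomposition
  simp only [lift, LinearMap.comp_apply, LinearEquiv.coe_coe, decomposeLinearEquiv_apply,
    decompose_of_mem A hx, ← lof_eq_of R, toModule_lof]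

open Classical in
noncomputable def projOn (s : Set ι) : Module.End R M :=
  h.lift fun i => if i ∈ s then (A i).subtype else 0

theorem projOn_apply_of_mem {s : Set ι} {i : ι} {x : M} (hx : x ∈ A i) (hi : i ∈ s) :
    h.projOn s x = x := by
  simp [projOn, h.lift_apply_of_mem _ hx, hi]

theorem projOn_apply_of_notMem {s : Set ι} {i : ι} {x : M} (hx : x ∈ A i) (hi : i ∉ s) :
    h.projOn s x = 0 := by
  simp [projOn, h.lift_apply_of_mem _ hx, hi]

theorem projOn_mem {s : Set ι} {W : Submodule R M} (hs : ∀ i ∈ s, A i ≤ W) (x : M) :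
    h.projOn s x ∈ W := by
  refine h.induction (p := fun x => h.projOn s x ∈ W) x (fun i x hx => ?_) (by simp)
    fun x y hx hy => by rw [map_add]; exact add_mem hx hy
  by_cases hi : i ∈ s
  · rw [h.projOn_apply_of_mem hx hi]; exact hs i hi hx
  · rw [h.projOn_apply_of_notMem hx hi]; exact zero_mem W

theorem projOn_mul_of_mapsTo {F : Module.End R M} {σ : ι → ι}
    (hF : ∀ i, ∀ x ∈ A i, F x ∈ A (σ i)) {s t : Set ι} (hst : ∀ i, σ i ∈ s ↔ i ∈ t) :
    h.projOn s * F = F * h.projOn t := by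
  refine h.linearMap_ext fun i x hx => ?_
  simp only [Module.End.mul_apply]
  by_cases hi : i ∈ t
  · rw [h.projOn_apply_of_mem (hF i x hx) ((hst i).2 hi), h.projOn_apply_of_mem hx hi]
  · rw [h.projOn_apply_of_notMem (hF i x hx) (mt (hst i).1 hi), h.projOn_apply_of_notMem hx hi,
      map_zero]

theorem eq_sum_smul_projOn (w : ι → ℤ) {Y : Module.End R M}
    (hY : ∀ i, ∀ x ∈ A i, Y x = (w i : R) • x) (T : Finset ℤ) (hT : ∀ i, A i ≠ ⊥ → w i ∈ T) :
    Y = ∑ c ∈ T, (c : R) • h.projOn {i | w i = c} := by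
  refine h.linearMap_ext fun i x hx => ?_
  by_cases hi : A i = ⊥
  · simp [(Submodule.eq_bot_iff _).1 hi x hx]
  rw [LinearMap.sum_apply, Finset.sum_eq_single (w i), LinearMap.smul_apply,
    h.projOn_apply_of_mem (s := {j | w j = w i}) hx rfl, hY i x hx]
  · intro c _ hc
    rw [LinearMap.smul_apply, h.projOn_apply_of_notMem (s := {j | w j = c}) hx (Ne.symm hc),
      smul_zero]
  · exact fun hT' => absurd (hT i hi) hT'

include h in
theorem mul_sub_mul_eq_smul_of_weight (w : ι → ℤ) {Y F : Module.End R M}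
    (hY : ∀ i, ∀ x ∈ A i, Y x = (w i : R) • x) {σ : ι → ι} (hF : ∀ i, ∀ x ∈ A i, F x ∈ A (σ i))
    {δ : ℤ} (hσ : ∀ i, w (σ i) = w i + δ) : Y * F - F * Y = (δ : R) • F := by
  refine h.linearMap_ext fun i x hx => ?_
  simp only [LinearMap.sub_apply, Module.End.mul_apply, LinearMap.smul_apply,
    hY _ _ (hF i x hx), hY i x hx, map_smul, hσ, ← sub_smul]
  congr 1
  push_cast
  ring

theorem projOn_weight_mul_pow {w : ι → ℤ} {σ : ι → ι} {N : Module.End R M}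
    (hN : ∀ i, ∀ x ∈ A i, N x ∈ A (σ i)) (hσ : ∀ i, w (σ i) = w i - 2) (c : ℤ) (n : ℕ) :
    h.projOn {i | w i = c - 2 * n} * N ^ n = N ^ n * h.projOn {i | w i = c} := by
  induction n with
  | zero => simp
  | succ n ih =>
    have hstep := h.projOn_mul_of_mapsTo hN (s := {i | w i = c - 2 * (n + 1 : ℕ)})
      (t := {i | w i = c - 2 * n}) (fun i => by simp only [Set.mem_ofPred_eq, hσ]; push_cast; omega)
    rw [pow_succ', ← mul_assoc, hstep, mul_assoc, ih, mul_assoc]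

theorem trace_projOn_weight_neg_mul {w : ι → ℤ} {σ : ι → ι} {N Z : Module.End R M}
    (hN : ∀ i, ∀ x ∈ A i, N x ∈ A (σ i)) (hσ : ∀ i, w (σ i) = w i - 2)
    (W : ℤ → Submodule R M) (hW : ∀ i, A i ≤ W (w i))
    (hiso : ∀ j : ℕ, (W j).map (N ^ j) = W (-j) ∧ ∀ x ∈ W j, (N ^ j) x = 0 → x = 0)
    (hZ : Commute N Z) (j : ℕ) :
    LinearMap.trace R M (h.projOn {i | w i = -j} * Z) =
      LinearMap.trace R M (h.projOn {i | w i = j} * Z) := by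
  have hmem : ∀ c x, h.projOn {i | w i = c} x ∈ W c :=
    fun c => h.projOn_mem fun i hi => hi ▸ hW i
  have hcomm := h.projOn_weight_mul_pow hN hσ j j
  rw [show (j : ℤ) - 2 * j = -j by ring] at hcomm
  obtain ⟨G, hNG, hGN⟩ :=
    LinearMap.exists_mul_eq_and_mul_eq_of_map_eq (hmem j) (hmem (-j)) hcomm (hiso j).1 (hiso j).2
  exact LinearMap.trace_mul_eq_trace_mul_of_commute (hZ.pow_left j) hNG hGN

end CommRing

section Graded

variable {R M ι : Type*} [CommRing R] [AddCommGroup M] [Module R M] [DecidableEq ι] [AddGroup ι]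
  {A : ι → Submodule R M} (h : IsInternal A)

noncomputable def homogeneousComponent (d : ι) (X : Module.End R M) : Module.End R M :=
  h.lift fun i => h.projOn {i + d} ∘ₗ X ∘ₗ (A i).subtype

theorem homogeneousComponent_apply_of_mem (d : ι) (X : Module.End R M) {i : ι} {x : M}
    (hx : x ∈ A i) : h.homogeneousComponent d X x = h.projOn {i + d} (X x) :=
  h.lift_apply_of_mem _ hx

theorem homogeneousComponent_mem (d : ι) (X : Module.End R M) {i : ι} {x : M} (hx : x ∈ A i) :
    h.homogeneousComponent d X x ∈ A (i + d) := by
  rw [h.homogeneousComponent_apply_of_mem d X hx]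
  exact h.projOn_mem (fun j hj => by rw [Set.mem_singleton_iff.1 hj]) _

theorem homogeneousComponent_mul_sub_mul {d : ι} {N X Y : Module.End R M}
    (hN : ∀ i, ∀ x ∈ A i, N x ∈ A (i - d)) (hY : ∀ i, ∀ x ∈ A i, Y x ∈ A i)
    (hXY : X * N - N * X = Y) :
    h.homogeneousComponent d X * N - N * h.homogeneousComponent d X = Y := by
  refine h.linearMap_ext fun i x hx => ?_
  have hNproj := h.projOn_mul_of_mapsTo hN (s := {i}) (t := {i + d})
    (fun j => by simp [sub_eq_iff_eq_add])
  simp only [LinearMap.sub_apply, Module.End.mul_apply,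
    h.homogeneousComponent_apply_of_mem d X (hN i x hx),
    h.homogeneousComponent_apply_of_mem d X hx, sub_add_cancel]
  rw [← Module.End.mul_apply N, ← hNproj, Module.End.mul_apply, ← map_sub, ← Module.End.mul_apply,
    ← Module.End.mul_apply, ← LinearMap.sub_apply, hXY,
    h.projOn_apply_of_mem (hY i x hx) (Set.mem_singleton i)]

end Graded

variable {K V ι : Type*} [Field K] [AddCommGroup V] [Module K V] [FiniteDimensional K V]
  [DecidableEq ι] {A : ι → Submodule K V}

theorem trace_mul_eq_zero_of_commute (h : IsInternal A) (w : ι → ℤ) {σ : ι → ι}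
    {N Y Z : Module.End K V}
    (hN : ∀ i, ∀ x ∈ A i, N x ∈ A (σ i)) (hσ : ∀ i, w (σ i) = w i - 2)
    (hY : ∀ i, ∀ x ∈ A i, Y x = (w i : K) • x)
    (W : ℤ → Submodule K V) (hW : ∀ i, A i ≤ W (w i))
    (hiso : ∀ j : ℕ, (W j).map (N ^ j) = W (-j) ∧ ∀ x ∈ W j, (N ^ j) x = 0 → x = 0)
    (hZ : Commute N Z) : LinearMap.trace K V (Y * Z) = 0 := by
  obtain ⟨T, hTneg, hT⟩ : ∃ T : Finset ℤ, (∀ c ∈ T, -c ∈ T) ∧ ∀ i, A i ≠ ⊥ → w i ∈ T := by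
    let F := ((WellFoundedGT.finite_ne_bot_of_iSupIndep h.submodule_iSupIndep).image w).toFinset
    refine ⟨F ∪ F.image Neg.neg, fun c hc => ?_, fun i hi => ?_⟩
    · simp only [Finset.mem_union, Finset.mem_image] at hc ⊢
      rcases hc with hc | ⟨d, hd, rfl⟩
      · exact Or.inr ⟨c, hc, rfl⟩
      · rw [neg_neg]; exact Or.inl hd
    · exact Finset.mem_union_left _ (by simpa [F] using ⟨i, hi, rfl⟩)
  rw [h.eq_sum_smul_projOn w hY T hT, Finset.sum_mul, map_sum]
  simp only [smul_mul_assoc, map_smul, smul_eq_mul]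
  refine Finset.sum_intCast_mul_eq_zero_of_even hTneg fun c => ?_
  obtain ⟨j, rfl | rfl⟩ := c.eq_nat_or_neg
  · exact h.trace_projOn_weight_neg_mul hN hσ W hW hiso hZ j
  · rw [neg_neg]; exact (h.trace_projOn_weight_neg_mul hN hσ W hW hiso hZ j).symm

end DirectSum.IsInternal

/-- Given a bigraded finite-dimensional complex vector space `V = ⊕ I^{p,q}`, a map `N` of
type `(-1,-1)`, and the semisimple operator `Y` acting by `p+q-k` on `I^{p,q}`, if each
`N^j : ⊕_{p+q=k+j} I^{p,q} → ⊕_{p+q=k-j} I^{p,q}` is an isomorphism, then there is a map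
`N⁺` of type `(1,1)` such that `{N⁺, Y, N}` is an `sl₂`-triple. -/
theorem sl2_triple_completion
    (V : Type*) [AddCommGroup V] [Module ℂ V] [FiniteDimensional ℂ V]
    (I : ℤ × ℤ → Submodule ℂ V) (hI : DirectSum.IsInternal I)
    (k : ℤ)
    (N Y : Module.End ℂ V)
    (hN : ∀ p q : ℤ, Submodule.map N (I (p, q)) ≤ I (p - 1, q - 1))
    (hY : ∀ p q : ℤ, ∀ v ∈ I (p, q), Y v = ((p + q - k : ℤ) : ℂ) • v)
    (hiso : ∀ j : ℕ,
      Submodule.map (N ^ j) (⨆ p : ℤ, ⨆ q : ℤ, ⨆ _ : p + q = k + j, I (p, q)) =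
        (⨆ p : ℤ, ⨆ q : ℤ, ⨆ _ : p + q = k - j, I (p, q)) ∧
      (∀ x ∈ (⨆ p : ℤ, ⨆ q : ℤ, ⨆ _ : p + q = k + j, I (p, q)), (N ^ j) x = 0 → x = 0)) :
    ∃ Nplus : Module.End ℂ V,
      (∀ p q : ℤ, Submodule.map Nplus (I (p, q)) ≤ I (p + 1, q + 1)) ∧
      Y * N - N * Y = (-2 : ℂ) • N ∧
      Y * Nplus - Nplus * Y = (2 : ℂ) • Nplus ∧
      Nplus * N - N * Nplus = Y := by
  let w : ℤ × ℤ → ℤ := fun i => i.1 + i.2 - k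
  let W : ℤ → Submodule ℂ V := fun c => ⨆ p : ℤ, ⨆ q : ℤ, ⨆ _ : p + q = k + c, I (p, q)
  have hN' : ∀ i, ∀ x ∈ I i, N x ∈ I (i - (1, 1)) := fun i x hx => hN i.1 i.2 ⟨x, hx, rfl⟩
  have hY' : ∀ i, ∀ x ∈ I i, Y x = (w i : ℂ) • x := fun i => hY i.1 i.2
  have hW : ∀ i, I i ≤ W (w i) := fun i =>
    le_iSup₂_of_le i.1 i.2 (le_iSup_of_le (by simp only [w]; omega) le_rfl)
  have hiso' : ∀ j : ℕ, (W j).map (N ^ j) = W (-j) ∧ ∀ x ∈ W j, (N ^ j) x = 0 → x = 0 := by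
    simpa only [W, sub_eq_add_neg] using hiso
  obtain ⟨X, hX⟩ := LinearMap.exists_mul_sub_mul_eq_of_trace_mul_eq_zero fun Z hZ =>
    hI.trace_mul_eq_zero_of_commute w hN'
      (fun i => by simp only [Prod.fst_sub, Prod.snd_sub, w]; ring) hY' W hW hiso' hZ
  refine ⟨hI.homogeneousComponent (1, 1) X, fun p q => Submodule.map_le_iff_le_comap.2
    fun x hx => hI.homogeneousComponent_mem (1, 1) X hx, ?_, ?_, ?_⟩
  · simpa using hI.mul_sub_mul_eq_smul_of_weight w hY' hN' (δ := -2)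
      fun i => by simp only [Prod.fst_sub, Prod.snd_sub, w]; ring
  · simpa using hI.mul_sub_mul_eq_smul_of_weight w hY'
      (fun i x hx => hI.homogeneousComponent_mem (1, 1) X hx) (δ := 2)
      fun i => by simp only [Prod.fst_add, Prod.snd_add, w]; ring
  · exact hI.homogeneousComponent_mul_sub_mul hN'
      (fun i x hx => hY' i x hx ▸ Submodule.smul_mem _ _ hx) hX
end
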